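/- Let R be a Noetherian commutative ring that is locally approximately Gorenstein, and let f ∈ R[[x₁,…,xₙ]] be a power series that is Gaussian over R, where the content c(f) is the ideal of R generated by the coefficients of f. Then c(f) is locally principal. -/

import Mathlib

/-- An Artinian local ring is Gorenstein iff its socle (the annihilator of the maximal
ideal) is one-dimensional over the residue field, i.e. generated by one nonzero element. -/
def IsArtinianGorensteinLocal (A : Type*) [CommRing A] : Prop :=
  IsArtinianRing A ∧ ∃ h : IsLocalRing A, ∃ x : A, x ≠ 0 ∧
    Submodule.annihilator (@IsLocalRing.maximalIdeal A _ h) = Ideal.span {x}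

/-- A Noetherian local ring `(A,m)` is approximately Gorenstein if for every `N` there is
an `m`-primary ideal `I ⊆ m^N` such that `A/I` is Gorenstein. -/
def IsApproximatelyGorenstein (A : Type*) [CommRing A] [IsLocalRing A] : Prop :=
  ∀ N : ℕ, ∃ I : Ideal A, I ≤ IsLocalRing.maximalIdeal A ^ N ∧ I.IsPrimary ∧
    I.radical = IsLocalRing.maximalIdeal A ∧ IsArtinianGorensteinLocal (A ⧸ I)

/-- `R` is locally approximately Gorenstein if each localization at a maximal ideal is
approximately Gorenstein. -/
def IsLocallyApproximatelyGorenstein (R : Type*) [CommRing R] : Prop :=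
  ∀ (m : Ideal R) (_ : m.IsMaximal),
    IsApproximatelyGorenstein (Localization m.primeCompl)

/-- The content of a multivariate formal power series: the ideal of `R` generated by its
coefficients. -/
noncomputable def psContent {R : Type*} [CommRing R] {n : ℕ}
    (f : MvPowerSeries (Fin n) R) : Ideal R :=
  Ideal.span (Set.range fun d => MvPowerSeries.coeff d f)

/-!
Localize at a maximal ideal, so `R` is local with maximal ideal `𝔪`, and let `c` be the
extended content. By Artin–Rees, `𝔪^N ∩ c ⊆ 𝔪c` for large `N`; pick `I ⊆ 𝔪^N` with `R/I`
Artinian Gorenstein. Gaussianity passes to `R/I`, and if `c(R/I)` is principal then, by the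
choice of `N` and Nakayama, so is `c`.

In an Artinian local ring `A` with simple socle `(x₀)`, annihilators of ideals that differ by
a simple module differ by at most a simple module, so `J ↦ ℓ(ann J) + ℓ(J)` is monotone; it
takes the value `ℓ(A)` at both `0` and `A`, hence everywhere. For a Gaussian `f` with content
`c`, two elements `r, r'` of `ann(𝔪c)` send `f` into the socle, `r f = x₀ Λ`, `r' f = x₀ Λ'`,
and then `f · (r Λ' - r' Λ) = 0`; the Gaussian property turns this into
`ℓ(ann(𝔪c)/ann c) ≤ 1`. By duality `ℓ(c/𝔪c) ≤ 1`, so `c` is principal.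
-/

open IsLocalRing

theorem monotone_of_forall_covBy {α β : Type*} [PartialOrder α] [WellFoundedGT α]
    [IsStronglyAtomic α] [Preorder β] {f : α → β} (hf : ∀ a b, a ⋖ b → f a ≤ f b) :
    Monotone f := by
  intro a b hab
  induction a using WellFoundedGT.induction with
  | _ a ih =>
    rcases hab.eq_or_lt with rfl | hlt
    · exact le_rfl
    obtain ⟨c, hac, hcb⟩ := exists_covBy_le_of_lt hlt
    exact (hf a c hac).trans (ih c hac.lt hcb)

namespace Submodule

variable {R M : Type*} [Ring R] [AddCommGroup M] [Module R M] {K J : Submodule R M}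

theorem length_eq_length_add_length_quotient (h : K ≤ J) :
    Module.length R J = Module.length R K + Module.length R (J ⧸ K.comap J.subtype) := by
  rw [Module.length_eq_add_of_exact _ _ (injective_subtype _) (mkQ_surjective _)
    (LinearMap.exact_subtype_mkQ (K.comap J.subtype)), (comapSubtypeEquivOfLe h).length_eq]

theorem length_eq_length_add_one_of_covBy (h : K ⋖ J) :
    Module.length R J = Module.length R K + 1 := by
  rw [length_eq_length_add_length_quotient h.le,
    Module.length_eq_one_iff.mpr ((covBy_iff_quot_is_simple h.le).mp h)]

theorem length_le_length_add_one_of_wcovBy (h : K ⩿ J) :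
    Module.length R J ≤ Module.length R K + 1 := by
  rcases h.eq_or_covBy with rfl | h
  · exact le_self_add
  · exact (length_eq_length_add_one_of_covBy h).le

theorem wcovBy_of_length_le_length_add_one [IsArtinian R M] [IsNoetherian R M] (hKJ : K ≤ J)
    (h : Module.length R J ≤ Module.length R K + 1) : K ⩿ J := by
  refine ⟨hKJ, fun X hKX hXJ => ?_⟩
  have hlt : Module.length R K + 1 < Module.length R J := by
    simp only [Module.length_submodule]
    exact (Order.add_one_le_of_lt (height_strictMono hKX)).trans_lt (height_strictMono hXJ)
  exact (hlt.trans_le h).false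

end Submodule

theorem Ideal.wcovBy_of_le_sup_span {A : Type*} [CommSemiring A] {K J : Ideal A} (hKJ : K ≤ J)
    (h : ∀ r ∈ J, r ∉ K → J ≤ K ⊔ span {r}) : K ⩿ J := by
  refine ⟨hKJ, fun X hKX hXJ => ?_⟩
  obtain ⟨r, hrX, hrK⟩ := SetLike.exists_of_lt hKX
  exact hXJ.not_ge ((h r (hXJ.le hrX) hrK).trans (sup_le hKX.le (span_le.mpr (by simpa))))

namespace IsLocalRing

variable {A : Type*} [CommRing A] [IsLocalRing A]

theorem le_of_le_sup_maximalIdeal_mul {c N : Ideal A} (hc : c.FG)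
    (h : c ≤ N ⊔ maximalIdeal A * c) : c ≤ N :=
  Submodule.le_of_le_smul_of_le_jacobson_bot hc (maximalIdeal_le_jacobson ⊥)
    (by rwa [Ideal.smul_eq_mul])

theorem isPrincipal_of_wcovBy {c : Ideal A} (hc : c.FG) (h : maximalIdeal A * c ⩿ c) :
    c.IsPrincipal := by
  obtain ⟨a, hac, hc_le⟩ : ∃ a ∈ c, c ≤ Ideal.span {a} ⊔ maximalIdeal A * c := by
    rcases h.eq_or_covBy with hMc | hMc
    · exact ⟨0, zero_mem c, le_sup_of_le_right hMc.ge⟩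
    obtain ⟨a, hac, haM⟩ := SetLike.exists_of_lt hMc.lt
    refine ⟨a, hac, (hMc.eq_or_eq le_sup_right (sup_le ?_ hMc.le)).resolve_left ?_ |>.ge⟩
    · exact Ideal.span_le.mpr (by simpa)
    · exact fun heq => haM (heq ▸ Ideal.mem_sup_left (Ideal.mem_span_singleton_self a))
  exact ⟨a, le_antisymm (le_of_le_sup_maximalIdeal_mul hc hc_le) (Ideal.span_le.mpr (by simpa))⟩

theorem isPrincipal_of_isPrincipal_map_quotient {c I : Ideal A} (hc : c.FG)
    (hI : I ⊓ c ≤ maximalIdeal A * c) (h : (c.map (Ideal.Quotient.mk I)).IsPrincipal) :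
    c.IsPrincipal := by
  obtain ⟨b, hb⟩ := h
  obtain ⟨a, hac, hab⟩ := (Ideal.mem_map_iff_of_surjective _ Ideal.Quotient.mk_surjective).mp
    (hb ▸ Submodule.mem_span_singleton_self b)
  refine ⟨a, le_antisymm (le_of_le_sup_maximalIdeal_mul hc fun x hx => ?_)
    (Ideal.span_le.mpr (by simpa))⟩
  obtain ⟨s, hs⟩ := Ideal.mem_span_singleton'.mp
    (hb ▸ Ideal.mem_map_of_mem (Ideal.Quotient.mk I) hx)
  obtain ⟨s, rfl⟩ := Ideal.Quotient.mk_surjective s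
  have hdiff : x - s * a ∈ I ⊓ c :=
    ⟨Ideal.Quotient.eq.mp (by rw [map_mul, hab, hs]), sub_mem hx (c.mul_mem_left s hac)⟩
  rw [show x = s * a + (x - s * a) by ring]
  exact Submodule.add_mem_sup (Ideal.mem_span_singleton'.mpr ⟨s, rfl⟩) (hI hdiff)

theorem mul_le_of_covBy {K J : Ideal A} (hJ : J.FG) (h : K ⋖ J) : maximalIdeal A * J ≤ K := by
  have hsup : K ⊔ maximalIdeal A * J = K := by
    refine (h.eq_or_eq le_sup_left (sup_le h.le Ideal.mul_le_right)).resolve_right fun hKJ => ?_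
    exact h.lt.not_ge (le_of_le_sup_maximalIdeal_mul hJ hKJ.ge)
  exact sup_eq_left.mp hsup

theorem mul_mem_annihilator_maximalIdeal {J : Ideal A} {r a : A}
    (hr : r ∈ (maximalIdeal A * J).annihilator) (ha : a ∈ J) :
    r * a ∈ (maximalIdeal A).annihilator :=
  Submodule.mem_annihilator.mpr fun u hu => by
    simpa [mul_comm, mul_left_comm] using
      Submodule.mem_annihilator.mp hr _ (Ideal.mul_mem_mul hu ha)

end IsLocalRing

namespace MvPowerSeries

variable {R S : Type*} [CommRing R] [CommRing S] {n : ℕ}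

def IsGaussian (f : MvPowerSeries (Fin n) R) : Prop :=
  ∀ g, psContent (f * g) = psContent f * psContent g

theorem coeff_mem_psContent (f : MvPowerSeries (Fin n) R) (d : Fin n →₀ ℕ) :
    coeff d f ∈ psContent f :=
  Ideal.subset_span ⟨d, rfl⟩

theorem mem_annihilator_psContent_iff {f : MvPowerSeries (Fin n) R} {r : R} :
    r ∈ (psContent f).annihilator ↔ ∀ d, r * coeff d f = 0 := by
  simp [psContent, Ideal.span, Submodule.mem_annihilator_span]

theorem psContent_map (φ : R →+* S) (f : MvPowerSeries (Fin n) R) :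
    psContent (map φ f) = (psContent f).map φ := by
  simp only [psContent, Ideal.map_span, ← Set.range_comp]
  rfl

theorem IsGaussian.map_of_surjective {φ : R →+* S} (hφ : Function.Surjective φ)
    {f : MvPowerSeries (Fin n) R} (hf : IsGaussian f) : IsGaussian (map φ f) := by
  intro g
  obtain ⟨g, rfl⟩ : ∃ g₀, map φ g₀ = g :=
    ⟨fun d => Function.surjInv hφ (coeff d g), by ext d; exact Function.surjInv_eq hφ _⟩
  rw [← map_mul, psContent_map, hf, Ideal.map_mul, psContent_map, psContent_map]

end MvPowerSeries

namespace IsLocalRing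

open MvPowerSeries

variable {A : Type*} [CommRing A] [IsLocalRing A] {x₀ : A}
  (hx : (maximalIdeal A).annihilator = Ideal.span {x₀})
include hx

theorem exists_mul_eq_mul_of_mem_annihilator_maximalIdeal_mul {J : Ideal A} {r a : A}
    (hr : r ∈ (maximalIdeal A * J).annihilator) (ha : a ∈ J) : ∃ u, r * a = u * x₀ :=
  (Ideal.mem_span_singleton'.mp (hx ▸ mul_mem_annihilator_maximalIdeal hr ha)).imp
    fun _ h => h.symm

theorem isUnit_of_mul_ne_zero {u : A} (h : u * x₀ ≠ 0) : IsUnit u := by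
  by_contra hu
  have hx₀ : x₀ ∈ (maximalIdeal A).annihilator := hx ▸ Ideal.mem_span_singleton_self x₀
  exact h (by simpa [mul_comm] using Submodule.mem_annihilator.mp hx₀ u hu)

theorem annihilator_wcovBy_of_covBy {K J : Ideal A} (hJ : J.FG) (h : K ⋖ J) :
    J.annihilator ⩿ K.annihilator := by
  obtain ⟨a, haJ, haK⟩ := SetLike.exists_of_lt h.lt
  have hJa : J = K ⊔ Ideal.span {a} :=
    ((h.eq_or_eq le_sup_left (sup_le h.le (Ideal.span_le.mpr (by simpa)))).resolve_left
      fun hK => haK (hK ▸ Ideal.mem_sup_right (Ideal.mem_span_singleton_self a))).symm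
  have hmem : ∀ r ∈ K.annihilator, r * a = 0 → r ∈ J.annihilator := fun r hrK hra => by
    rw [hJa, Submodule.annihilator_sup, Ideal.span, Submodule.mem_inf,
      Submodule.mem_annihilator_span_singleton, smul_eq_mul]
    exact ⟨hrK, hra⟩
  have hsoc : ∀ r ∈ K.annihilator, ∃ u, r * a = u * x₀ := fun r hr =>
    exists_mul_eq_mul_of_mem_annihilator_maximalIdeal_mul hx
      (Submodule.annihilator_mono (mul_le_of_covBy hJ h) hr) haJ
  refine Ideal.wcovBy_of_le_sup_span (Submodule.annihilator_mono h.le) fun r₁ hr₁ hr₁J r₂ hr₂ => ?_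
  obtain ⟨u₁, hu₁⟩ := hsoc r₁ hr₁
  obtain ⟨u₂, hu₂⟩ := hsoc r₂ hr₂
  have hunit : IsUnit u₁ := isUnit_of_mul_ne_zero hx (hu₁ ▸ fun h0 => hr₁J (hmem r₁ hr₁ h0))
  have hdiff : r₂ * u₁ - r₁ * u₂ ∈ J.annihilator := by
    refine hmem _ (sub_mem (Ideal.mul_mem_right _ _ hr₂) (Ideal.mul_mem_right _ _ hr₁)) ?_
    linear_combination u₁ * hu₂ - u₂ * hu₁
  rw [← Ideal.mul_unit_mem_iff_mem _ hunit, show r₂ * u₁ = (r₂ * u₁ - r₁ * u₂) + r₁ * u₂ by ring]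
  exact Submodule.add_mem_sup hdiff (Ideal.mul_mem_right _ _ (Ideal.mem_span_singleton_self r₁))

theorem length_annihilator_add_length [IsArtinianRing A] (J : Ideal A) :
    Module.length A J.annihilator + Module.length A J = Module.length A A := by
  have hmono : Monotone fun J : Ideal A => Module.length A J.annihilator + Module.length A J := by
    refine monotone_of_forall_covBy fun K J h => ?_
    calc Module.length A K.annihilator + Module.length A K
        ≤ Module.length A J.annihilator + 1 + Module.length A K := by
          gcongr
          exact Submodule.length_le_length_add_one_of_wcovBy
            (annihilator_wcovBy_of_covBy hx (IsNoetherian.noetherian J) h)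
      _ = Module.length A J.annihilator + Module.length A J := by
          rw [Submodule.length_eq_length_add_one_of_covBy h]
          ring
  refine le_antisymm ?_ ?_
  · have hann : (⊤ : Ideal A).annihilator = ⊥ := by
      rw [Submodule.annihilator_top, Module.annihilator_eq_bot]
      infer_instance
    have := hmono (le_top : J ≤ ⊤)
    dsimp only at this
    rwa [hann, Module.length_bot, zero_add, Module.length_top] at this
  · have := hmono (bot_le : ⊥ ≤ J)
    dsimp only at this
    rwa [Submodule.annihilator_bot, Module.length_bot, add_zero, Module.length_top] at this

theorem annihilator_psContent_wcovBy {n : ℕ} {f : MvPowerSeries (Fin n) A} (hf : IsGaussian f) :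
    (psContent f).annihilator ⩿ (maximalIdeal A * psContent f).annihilator := by
  have hsoc : ∀ r ∈ (maximalIdeal A * psContent f).annihilator,
      ∃ Λ : MvPowerSeries (Fin n) A, C r * f = C x₀ * Λ := fun r hr => by
    choose Λ hΛ using fun d => exists_mul_eq_mul_of_mem_annihilator_maximalIdeal_mul hx hr
      (coeff_mem_psContent f d)
    exact ⟨show MvPowerSeries (Fin n) A from Λ,
      by ext d; rw [coeff_C_mul, coeff_C_mul, hΛ, mul_comm]; rfl⟩
  refine Ideal.wcovBy_of_le_sup_span (Submodule.annihilator_mono Ideal.mul_le_right)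
    fun r hr hrf r' hr' => ?_
  obtain ⟨Λ, hΛ⟩ := hsoc r hr
  obtain ⟨Λ', hΛ'⟩ := hsoc r' hr'
  set g := C r * Λ' - C r' * Λ
  have hfg : f * g = 0 := by linear_combination Λ' * hΛ - Λ * hΛ'
  have hg : ∀ d, coeff d g ∈ (psContent f).annihilator := fun d => by
    rw [mem_annihilator_psContent_iff]
    intro e
    have hmem := Ideal.mul_mem_mul (coeff_mem_psContent f e) (coeff_mem_psContent g d)
    rw [← hf, hfg] at hmem
    simpa [psContent, mul_comm] using hmem
  obtain ⟨d, hd⟩ : ∃ d, r * coeff d f ≠ 0 := by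
    simpa [mem_annihilator_psContent_iff] using hrf
  have hΛd : r * coeff d f = x₀ * coeff d Λ := by
    rw [← coeff_C_mul, ← coeff_C_mul, hΛ]
  have hunit : IsUnit (coeff d Λ) := isUnit_of_mul_ne_zero hx (by rwa [mul_comm, ← hΛd])
  rw [← Ideal.mul_unit_mem_iff_mem _ hunit,
    show r' * coeff d Λ = -coeff d g + coeff d Λ' * r by simp [g]; ring]
  exact Submodule.add_mem_sup (neg_mem (hg d))
    (Ideal.mul_mem_left _ _ (Ideal.mem_span_singleton_self r))

theorem isPrincipal_psContent_of_isGaussian [IsArtinianRing A] {n : ℕ}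
    {f : MvPowerSeries (Fin n) A} (hf : IsGaussian f) : (psContent f).IsPrincipal := by
  set c := psContent f
  set M := maximalIdeal A
  refine isPrincipal_of_wcovBy (IsNoetherian.noetherian c)
    (Submodule.wcovBy_of_length_le_length_add_one Ideal.mul_le_right ?_)
  refine (ENat.add_le_add_iff_left (Module.length_ne_top (R := A) (M := c.annihilator))).mp ?_
  calc Module.length A c.annihilator + Module.length A c
      = Module.length A (M * c).annihilator + Module.length A (M * c) := by
        rw [length_annihilator_add_length hx, length_annihilator_add_length hx]
    _ ≤ Module.length A c.annihilator + 1 + Module.length A (M * c) := by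
        gcongr
        exact Submodule.length_le_length_add_one_of_wcovBy (annihilator_psContent_wcovBy hx hf)
    _ = Module.length A c.annihilator + (Module.length A (M * c) + 1) := by ring

end IsLocalRing

theorem IsLocalization.AtPrime.surjective_quotientMk_comp_algebraMap {R Rₚ : Type*} [CommRing R]
    [CommRing Rₚ] [Algebra R Rₚ] (p : Ideal R) [p.IsMaximal] [IsLocalization.AtPrime Rₚ p]
    [IsLocalRing Rₚ] {I : Ideal Rₚ} {t : ℕ} (hI : maximalIdeal Rₚ ^ t ≤ I) :
    Function.Surjective ((Ideal.Quotient.mk I).comp (algebraMap R Rₚ)) := by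
  intro y
  obtain ⟨s, rfl⟩ := Ideal.Quotient.mk_surjective y
  obtain ⟨x, hx⟩ := (equivQuotMaximalIdealPow p Rₚ t).surjective (Ideal.Quotient.mk _ s)
  obtain ⟨x, rfl⟩ := Ideal.Quotient.mk_surjective x
  rw [equivQuotMaximalIdealPow_apply_mk] at hx
  exact ⟨x, Ideal.Quotient.eq.mpr (hI (Ideal.Quotient.eq.mp hx))⟩

/-- Let `R` be Noetherian and locally approximately Gorenstein.  If
`f ∈ R[[x₁,…,xₙ]]` is Gaussian over `R`, then `c(f)` is locally principal. -/
theorem locally_principal_content_of_gaussian_powerSeries (R : Type*) [CommRing R]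
    [IsNoetherianRing R] (hag : IsLocallyApproximatelyGorenstein R) (n : ℕ)
    (f : MvPowerSeries (Fin n) R)
    (hf : ∀ g : MvPowerSeries (Fin n) R,
      psContent (f * g) = psContent f * psContent g) :
    ∀ (m : Ideal R) (_ : m.IsMaximal),
      (Ideal.map (algebraMap R (Localization m.primeCompl)) (psContent f)).IsPrincipal := by
  intro m hm
  set S := Localization m.primeCompl
  set c := (psContent f).map (algebraMap R S)
  obtain ⟨k, hk⟩ := (maximalIdeal S).exists_pow_inf_eq_pow_smul c
  have hAR : maximalIdeal S ^ (k + 1) ⊓ c ≤ maximalIdeal S * c := by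
    have h := hk (k + 1) k.le_succ
    simp only [Nat.add_sub_cancel_left, pow_one, Ideal.smul_eq_mul, Ideal.mul_top] at h
    exact h.le.trans (Ideal.mul_mono_right inf_le_right)
  obtain ⟨I, hIle, -, hIrad, _, _, x₀, -, hx⟩ := hag m hm (k + 1)
  obtain ⟨t, ht⟩ := Ideal.exists_pow_le_of_le_radical_of_fg hIrad.ge
    (IsNoetherian.noetherian (maximalIdeal S))
  have hsurj := IsLocalization.AtPrime.surjective_quotientMk_comp_algebraMap m ht
  refine isPrincipal_of_isPrincipal_map_quotient (IsNoetherian.noetherian c)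
    ((inf_le_inf_right c hIle).trans hAR) ?_
  rw [Ideal.map_map, ← MvPowerSeries.psContent_map]
  exact isPrincipal_psContent_of_isGaussian hx (MvPowerSeries.IsGaussian.map_of_surjective hsurj hf)
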